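/- (Monotonicity of # and ♮.) For all λ-terms M and N, if M ↠λ N (multi-step βη-reduction in λ), then M# ↠Λ$ N# and M♮ ↠Λ$ N♮ (multi-step reduction in Λ$). -/

import Mathlib

namespace Shift0

/-! ### The calculus Λ$ (de Bruijn representation) -/

/-- Terms of Λ$: variables, λ-abstractions, freeze `$(M)`, application, thaw `S₀(M)`. -/
inductive Tm : Type
  | var : Nat → Tm
  | lam : Tm → Tm
  | freeze : Tm → Tm
  | app : Tm → Tm → Tm
  | thaw : Tm → Tm
  deriving DecidableEq

namespace Tm

/-- Values of Λ$: variables, abstractions and frozen terms. -/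
inductive IsValue : Tm → Prop
  | var (n : Nat) : IsValue (.var n)
  | lam (M : Tm) : IsValue (.lam M)
  | freeze (M : Tm) : IsValue (.freeze M)

/-- Nonvalues of Λ$: applications and thawed terms. -/
inductive IsNonvalue : Tm → Prop
  | app (M N : Tm) : IsNonvalue (.app M N)
  | thaw (M : Tm) : IsNonvalue (.thaw M)

/-- Boolean value test. -/
def isVal : Tm → Bool
  | .var _ => true
  | .lam _ => true
  | .freeze _ => true
  | .app _ _ => false
  | .thaw _ => false

/-- Lift (shift) the free de Bruijn variables `≥ d` up by one. -/
def lift (d : Nat) : Tm → Tm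
  | .var n => if n < d then .var n else .var (n+1)
  | .lam M => .lam (lift (d+1) M)
  | .freeze M => .freeze (lift d M)
  | .app M N => .app (lift d M) (lift d N)
  | .thaw M => .thaw (lift d M)

/-- Capture-avoiding substitution `M[N/x]` (for the de Bruijn variable `x`);
the variables above `x` are shifted down by one. -/
def subst : Tm → Nat → Tm → Tm
  | .var n, x, N => if n = x then N else if n < x then .var n else .var (n-1)
  | .lam M, x, N => .lam (subst M (x+1) (N.lift 0))
  | .freeze M, x, N => .freeze (subst M x N)
  | .app M L, x, N => .app (subst M x N) (subst L x N)
  | .thaw M, x, N => .thaw (subst M x N)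

/-- `M $ N` is sugar for `$(N) M`. -/
def dol (M N : Tm) : Tm := .app (.freeze N) M

/-- `let x = M in N` is sugar for `S₀k.((λx.(k $ N)) $ M)`;
here `N` has the let-bound variable as de Bruijn index `0`. -/
def letIn (M N : Tm) : Tm :=
  .thaw (.lam (dol (.lam (dol (.var 1) (N.lift 1))) (M.lift 0)))

end Tm

/-- Bindable contexts `J ::= [] M | V [] | S₀([])`. -/
inductive JCtx : Type
  | appL : Tm → JCtx
  | appR : Tm → JCtx
  | thaw : JCtx

namespace JCtx

/-- Well-formedness: in `V []` the term `V` must be a value. -/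
def Wf : JCtx → Prop
  | .appL _ => True
  | .appR V => V.IsValue
  | .thaw => True

/-- Plugging a term into a bindable context. -/
def plug : JCtx → Tm → Tm
  | .appL N, M => .app M N
  | .appR V, M => .app V M
  | .thaw, M => .thaw M

/-- Lift the free variables `≥ d` of a bindable context. -/
def lift (d : Nat) : JCtx → JCtx
  | .appL N => .appL (N.lift d)
  | .appR V => .appR (V.lift d)
  | .thaw => .thaw

end JCtx

/-- Pure contexts `K ::= [] | J[K]`, represented as a list of bindable
contexts (head outermost). -/
abbrev KCtx : Type := List JCtx

/-- Plugging a term into a pure context. -/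
def KCtx.plug : KCtx → Tm → Tm
  | [], M => M
  | (J :: K), M => J.plug (KCtx.plug K M)

/-- Well-formedness of a pure context. -/
def KCtx.Wf (K : KCtx) : Prop := ∀ J ∈ K, JCtx.Wf J

/-- Lift the free variables `≥ d` of a pure context. -/
def KCtx.lift (d : Nat) (K : KCtx) : KCtx := K.map (JCtx.lift d)

namespace Tm

/-- The basic contractions of Λ$. -/
inductive Contr : Tm → Tm → Prop
  | betav (M V : Tm) : V.IsValue → Contr (.app (.lam M) V) (M.subst 0 V)
  | etav (V : Tm) : V.IsValue → Contr (.lam (.app (V.lift 0) (.var 0))) V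
  | dolv (V : Tm) : V.IsValue → Contr (.freeze V) (.lam (.app (.var 0) (V.lift 0)))
  | dolsh (V : Tm) : V.IsValue → Contr (.freeze (.thaw V)) V
  | shdol (M : Tm) : Contr (.thaw (.freeze M)) M
  | pure (V : Tm) : V.IsValue → Contr (.thaw (.lam (.app (.var 0) (V.lift 0)))) V
  | bind (J : JCtx) (P : Tm) : J.Wf → P.IsNonvalue →
      Contr (J.plug P) (letIn P ((J.lift 0).plug (.var 0)))

/-- One-step reduction of Λ$: closure of the contractions under arbitrary
contexts (including under binders). -/
inductive Step : Tm → Tm → Prop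
  | contr {M N : Tm} : Contr M N → Step M N
  | lam {M N : Tm} : Step M N → Step (.lam M) (.lam N)
  | freeze {M N : Tm} : Step M N → Step (.freeze M) (.freeze N)
  | appL {M N L : Tm} : Step M N → Step (.app M L) (.app N L)
  | appR {M N L : Tm} : Step M N → Step (.app L M) (.app L N)
  | thaw {M N : Tm} : Step M N → Step (.thaw M) (.thaw N)

/-- Multi-step reduction `↠Λ$`. -/
def Steps : Tm → Tm → Prop := Relation.ReflTransGen Step

/-- Convertibility `=Λ$`: the equivalence generated by reduction. -/
def Equiv : Tm → Tm → Prop := Relation.EqvGen Step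

end Tm

/-! ### The pure λ-calculus with βη -/

/-- Terms of the pure λ-calculus. -/
inductive Lam : Type
  | var : Nat → Lam
  | lam : Lam → Lam
  | app : Lam → Lam → Lam
  deriving DecidableEq

namespace Lam

/-- Lift the free de Bruijn variables `≥ d` up by one. -/
def lift (d : Nat) : Lam → Lam
  | .var n => if n < d then .var n else .var (n+1)
  | .lam M => .lam (lift (d+1) M)
  | .app M N => .app (lift d M) (lift d N)

/-- Capture-avoiding substitution `M[N/x]`. -/
def subst : Lam → Nat → Lam → Lam
  | .var n, x, N => if n = x then N else if n < x then .var n else .var (n-1)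
  | .lam M, x, N => .lam (subst M (x+1) (N.lift 0))
  | .app M L, x, N => .app (subst M x N) (subst L x N)

/-- β and η contractions. -/
inductive Contr : Lam → Lam → Prop
  | beta (M N : Lam) : Contr (.app (.lam M) N) (M.subst 0 N)
  | eta (M : Lam) : Contr (.lam (.app (M.lift 0) (.var 0))) M

/-- One-step βη-reduction, closed under arbitrary contexts. -/
inductive Step : Lam → Lam → Prop
  | contr {M N : Lam} : Contr M N → Step M N
  | lam {M N : Lam} : Step M N → Step (.lam M) (.lam N)
  | appL {M N L : Lam} : Step M N → Step (.app M L) (.app N L)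
  | appR {M N L : Lam} : Step M N → Step (.app L M) (.app L N)

/-- Multi-step βη-reduction `↠λ`. -/
def Steps : Lam → Lam → Prop := Relation.ReflTransGen Step

/-- βη-convertibility `=λ`. -/
def Equiv : Lam → Lam → Prop := Relation.EqvGen Step

end Lam

end Shift0

namespace Shift0

/-! ### The CPS translation `* : Λ$ → λ` and its value part `†` -/

mutual

/-- The CPS translation `M*`.  It is the full unfolding of the equations
`V* = λk.k V†`, `J[P]* = λk.P* (λx.(J[x]* k))`, `(V W)* = V† W†` and
`(S₀(V))* = V†`. -/
def cps : Tm → Lam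
  | .var n => .lam (.app (.var 0) (.var (n+1)))
  | .lam M => .lam (.app (.var 0) ((Lam.lam (cps M)).lift 0))
  | .freeze M => .lam (.app (.var 0) ((cps M).lift 0))
  | .app M N =>
      if M.isVal then
        if N.isVal then .app (cpsV M) (cpsV N)
        else
          .lam (.app ((cps N).lift 0)
            (.lam (.app (.app (((cpsV M).lift 0).lift 0) (.var 0)) (.var 1))))
      else
        if N.isVal then
          .lam (.app ((cps M).lift 0)
            (.lam (.app (.app (.var 0) (((cpsV N).lift 0).lift 0)) (.var 1))))
        else
          .lam (.app ((cps M).lift 0)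
            (.lam (.app
              (.lam (.app ((((cps N).lift 0).lift 0).lift 0)
                (.lam (.app (.app (.var 2) (.var 0)) (.var 1)))))
              (.var 1))))
  | .thaw M =>
      if M.isVal then cpsV M
      else .lam (.app ((cps M).lift 0) (.lam (.app (.var 0) (.var 1))))

/-- The value part `V†` of the CPS translation (junk on nonvalues). -/
def cpsV : Tm → Lam
  | .var n => .var n
  | .lam M => .lam (cps M)
  | .freeze M => cps M
  | .app _ _ => .var 0
  | .thaw _ => .var 0

end

/-! ### The direct-style translation `# : λ → Λ$` and its auxiliary `♮` -/

namespace Lam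

/-- Does the de Bruijn variable `x` occur free in the term? -/
def hasVar (x : Nat) : Lam → Bool
  | .var n => n = x
  | .lam M => hasVar (x+1) M
  | .app M N => hasVar x M || hasVar x N

/-- Shift the free de Bruijn variables `> d` down by one
(inverse of `lift d` on terms not containing `d` free). -/
def lower (d : Nat) : Lam → Lam
  | .var n => if d < n then .var (n-1) else .var n
  | .lam M => .lam (lower (d+1) M)
  | .app M N => .app (lower d M) (lower d N)

/-- Size of a λ-term. -/
def size : Lam → Nat
  | .var _ => 1
  | .lam M => size M + 1
  | .app M N => size M + size N + 1

theorem size_lower (d : Nat) (M : Lam) : (lower d M).size = M.size := by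
  induction M generalizing d with
  | var n => simp only [lower]; split <;> rfl
  | lam M ih => simp [lower, size, ih]
  | app M N ihM ihN => simp [lower, size, ihM, ihN]

end Lam

mutual

/-- The direct-style translation `M#`; the case `(λx.x N)# = N♮` (with
`x ∉ FV(N)`) is rendered by checking that de Bruijn variable `0` does not
occur in `N` and lowering the remaining variables. -/
def ds : Lam → Tm
  | .var n => .thaw (.var n)
  | .app M N => .app (nat M) (nat N)
  | .lam (.app (.var 0) N) =>
      if N.hasVar 0 then .thaw (.lam (.app (.var 0) (nat N)))
      else nat (N.lower 0)
  | .lam M => .thaw (.lam (ds M))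
termination_by M => M.size
decreasing_by all_goals simp [Lam.size, Lam.size_lower] <;> omega

/-- The auxiliary direct-style translation `M♮`. -/
def nat : Lam → Tm
  | .var n => .var n
  | .lam M => .lam (ds M)
  | .app M N => .freeze (.app (nat M) (nat N))
termination_by M => M.size
decreasing_by all_goals simp [Lam.size, Lam.size_lower] <;> omega

end

end Shift0

namespace Shift0

/-! ### Materzok's calculus λ$ -/

/-- Terms of λ$: variables, abstractions, applications, `S₀x.e`
(the body is under a binder) and `e $ e'`. -/
inductive LTm : Type
  | var : Nat → LTm
  | lam : LTm → LTm
  | app : LTm → LTm → LTm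
  | shift : LTm → LTm
  | dollar : LTm → LTm → LTm
  deriving DecidableEq

namespace LTm

/-- Values of λ$: variables and abstractions. -/
inductive IsValue : LTm → Prop
  | var (n : Nat) : IsValue (.var n)
  | lam (e : LTm) : IsValue (.lam e)

/-- Lift the free de Bruijn variables `≥ d` up by one. -/
def lift (d : Nat) : LTm → LTm
  | .var n => if n < d then .var n else .var (n+1)
  | .lam e => .lam (lift (d+1) e)
  | .app e f => .app (lift d e) (lift d f)
  | .shift e => .shift (lift (d+1) e)
  | .dollar e f => .dollar (lift d e) (lift d f)

/-- Capture-avoiding substitution `e[v/x]`. -/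
def subst : LTm → Nat → LTm → LTm
  | .var n, x, N => if n = x then N else if n < x then .var n else .var (n-1)
  | .lam e, x, N => .lam (subst e (x+1) (N.lift 0))
  | .app e f, x, N => .app (subst e x N) (subst f x N)
  | .shift e, x, N => .shift (subst e (x+1) (N.lift 0))
  | .dollar e f, x, N => .dollar (subst e x N) (subst f x N)

end LTm

/-- Pure contexts of λ$: `E ::= [] | E e | v E | E $ e`. -/
inductive ECtx : Type
  | hole : ECtx
  | appL : ECtx → LTm → ECtx
  | appR : LTm → ECtx → ECtx
  | dolL : ECtx → LTm → ECtx

namespace ECtx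

/-- Well-formedness: in `v E` the term `v` must be a value. -/
def Wf : ECtx → Prop
  | .hole => True
  | .appL E _ => E.Wf
  | .appR v E => v.IsValue ∧ E.Wf
  | .dolL E _ => E.Wf

/-- Plugging a term into a pure context of λ$. -/
def plug : ECtx → LTm → LTm
  | .hole, e => e
  | .appL E f, e => .app (E.plug e) f
  | .appR v E, e => .app v (E.plug e)
  | .dolL E f, e => .dollar (E.plug e) f

/-- Lift the free variables `≥ d` of a pure context. -/
def lift (d : Nat) : ECtx → ECtx
  | .hole => .hole
  | .appL E f => .appL (E.lift d) (f.lift d)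
  | .appR v E => .appR (v.lift d) (E.lift d)
  | .dolL E f => .dolL (E.lift d) (f.lift d)

end ECtx

namespace LTm

/-- The axioms of λ$. -/
inductive Ax : LTm → LTm → Prop
  | betav (e v : LTm) : v.IsValue → Ax (.app (.lam e) v) (e.subst 0 v)
  | etav (v : LTm) : v.IsValue → Ax (.lam (.app (v.lift 0) (.var 0))) v
  | dolv (v w : LTm) : v.IsValue → w.IsValue → Ax (.dollar v w) (.app v w)
  | dolE (v : LTm) (E : ECtx) (e : LTm) : v.IsValue → E.Wf →
      Ax (.dollar v (E.plug e))
         (.dollar (.lam (.dollar (v.lift 0) ((E.lift 0).plug (.var 0)))) e)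
  | betad (v e : LTm) : v.IsValue → Ax (.dollar v (.shift e)) (e.subst 0 v)
  | etad (e : LTm) : Ax (.shift (.dollar (.var 0) (e.lift 0))) e

/-- The axioms applied in an arbitrary context. -/
inductive AStep : LTm → LTm → Prop
  | ax {e f : LTm} : Ax e f → AStep e f
  | lam {e f : LTm} : AStep e f → AStep (.lam e) (.lam f)
  | appL {e f g : LTm} : AStep e f → AStep (.app e g) (.app f g)
  | appR {e f g : LTm} : AStep e f → AStep (.app g e) (.app g f)
  | shift {e f : LTm} : AStep e f → AStep (.shift e) (.shift f)
  | dolL {e f g : LTm} : AStep e f → AStep (.dollar e g) (.dollar f g)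
  | dolR {e f g : LTm} : AStep e f → AStep (.dollar g e) (.dollar g f)

/-- The equational theory `=λ$` generated by the axioms. -/
def Equiv : LTm → LTm → Prop := Relation.EqvGen AStep

end LTm

/-- The embedding `ι : λ$ → Λ$`. -/
def iota : LTm → Tm
  | .var n => .var n
  | .lam e => .lam (iota e)
  | .app e f => .app (iota e) (iota f)
  | .shift e => .thaw (.lam (iota e))
  | .dollar e f => .app (.freeze (iota f)) (iota e)

/-- The translation `π : Λ$ → λ$`. -/
def pi : Tm → LTm
  | .var n => .var n
  | .lam M => .lam (pi M)
  | .freeze M => .lam (.dollar (.var 0) ((pi M).lift 0))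
  | .app M N => .app (pi M) (pi N)
  | .thaw M => .app (.lam (.shift (.app (.var 1) (.var 0)))) (pi M)

/-- Materzok's CPS translation `⟦·⟧ : λ$ → λ` (with the value translation
`⟪x⟫ = x`, `⟪λx.e⟫ = λx.⟦e⟧` inlined). -/
def mcps : LTm → Lam
  | .var n => .lam (.app (.var 0) (.var (n+1)))
  | .lam e => .lam (.app (.var 0) ((Lam.lam (mcps e)).lift 0))
  | .app e f => .lam (.app ((mcps e).lift 0)
      (.lam (.app (((mcps f).lift 0).lift 0)
        (.lam (.app (.app (.var 1) (.var 0)) (.var 2))))))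
  | .shift e => .lam (mcps e)
  | .dollar e f => .lam (.app ((mcps e).lift 0)
      (.lam (.app (.app (((mcps f).lift 0).lift 0) (.var 0)) (.var 1))))

end Shift0

/-!
The translation `(λx.A)#` differs from `S₀(λx.A#)` only in the η-like case `(λx.x N)# = N♮`,
and there the two are linked by one `pure` contraction; likewise `S₀(M♮) ↠ M#` and
`$(M#) ↠ M♮`. Up to these administrative reductions, a β-step `(λx.A) B ↦ A[B/x]` is
simulated by `βv` followed by `(A#)[B♮/x] ↠ (A[B/x])#` (substitution commutes with `#` and
`♮` up to reduction), an η-step by `ηv`, and a step in context by congruence.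
-/

namespace Shift0

open Relation

namespace Lam

theorem lift_lift (i j : Nat) (M : Lam) (h : i ≤ j) :
    lift i (lift j M) = lift (j + 1) (lift i M) := by
  induction M generalizing i j with
  | var n =>
      simp only [lift]
      split_ifs <;> simp only [lift] <;> split_ifs <;>
        (try simp only [Lam.var.injEq]) <;> omega
  | lam M ih => simp only [lift, Lam.lam.injEq]; exact ih _ _ (by omega)
  | app M N ihM ihN => simp only [lift, Lam.app.injEq]; exact ⟨ihM _ _ h, ihN _ _ h⟩

theorem hasVar_lift_of_lt (x d : Nat) (M : Lam) (h : x < d) :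
    hasVar x (lift d M) = hasVar x M := by
  induction M generalizing x d with
  | var n =>
      simp only [lift]
      split_ifs <;> simp only [hasVar, decide_eq_decide]; omega
  | lam M ih => simp only [lift, hasVar]; exact ih _ _ (by omega)
  | app M N ihM ihN => simp only [lift, hasVar, ihM _ _ h, ihN _ _ h]

theorem hasVar_succ_lift_of_le (x d : Nat) (M : Lam) (h : d ≤ x) :
    hasVar (x + 1) (lift d M) = hasVar x M := by
  induction M generalizing x d with
  | var n =>
      simp only [lift]
      split_ifs <;> simp only [hasVar, decide_eq_decide] <;> omega
  | lam M ih => simp only [lift, hasVar]; exact ih _ _ (by omega)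
  | app M N ihM ihN => simp only [lift, hasVar, ihM _ _ h, ihN _ _ h]

theorem hasVar_lift_self (d : Nat) (M : Lam) : hasVar d (lift d M) = false := by
  induction M generalizing d with
  | var n =>
      simp only [lift]
      split_ifs <;> (simp only [hasVar, decide_eq_false_iff_not]; omega)
  | lam M ih => simp only [lift, hasVar]; exact ih _
  | app M N ihM ihN => simp [lift, hasVar, ihM, ihN]

theorem lower_lift (d : Nat) (M : Lam) : lower d (lift d M) = M := by
  induction M generalizing d with
  | var n =>
      simp only [lift]
      split_ifs <;> simp only [lower] <;> split_ifs <;>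
        (try simp only [Lam.var.injEq]) <;> omega
  | lam M ih => simp only [lift, lower, Lam.lam.injEq]; exact ih _
  | app M N ihM ihN => simp [lift, lower, ihM, ihN]

theorem lift_lower (d : Nat) (M : Lam) (h : hasVar d M = false) :
    lift d (lower d M) = M := by
  induction M generalizing d with
  | var n =>
      simp only [hasVar, decide_eq_false_iff_not] at h
      simp only [lower]
      split_ifs <;> simp only [lift] <;> split_ifs <;>
        (try simp only [Lam.var.injEq]) <;> omega
  | lam M ih =>
      simp only [hasVar] at h
      simp only [lower, lift, Lam.lam.injEq]; exact ih _ h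
  | app M N ihM ihN =>
      simp only [hasVar, Bool.or_eq_false_iff] at h
      simp [lower, lift, ihM _ h.1, ihN _ h.2]

theorem lower_succ_lift (i j : Nat) (M : Lam) (h : i ≤ j) :
    lower (j + 1) (lift i M) = lift i (lower j M) := by
  induction M generalizing i j with
  | var n =>
      simp only [lift, lower]
      split_ifs <;> simp only [lift, lower] <;> split_ifs <;>
        (try simp only [Lam.var.injEq]) <;> omega
  | lam M ih => simp only [lift, lower, Lam.lam.injEq]; exact ih _ _ (by omega)
  | app M N ihM ihN => simp [lift, lower, ihM _ _ h, ihN _ _ h]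

theorem lower_zero_lift_succ (d : Nat) (M : Lam) (h : hasVar 0 M = false) :
    lower 0 (lift (d + 1) M) = lift d (lower 0 M) := by
  conv_lhs => rw [← lift_lower 0 M h, ← lift_lift 0 d _ (Nat.zero_le d), lower_lift]

theorem subst_succ_lift (M : Lam) (d x : Nat) (N : Lam) (h : d ≤ x) :
    (lift d M).subst (x + 1) (lift d N) = lift d (M.subst x N) := by
  induction M generalizing d x N with
  | var n =>
      simp only [lift, subst]
      split_ifs <;> simp only [subst, lift] <;> split_ifs <;>
        (try simp only [Lam.var.injEq]) <;> omega
  | lam M ih =>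
      simp only [lift, subst, Lam.lam.injEq]
      rw [lift_lift 0 d N (Nat.zero_le d)]
      exact ih _ _ _ (by omega)
  | app M L ihM ihL => simp [lift, subst, ihM _ _ _ h, ihL _ _ _ h]

theorem lower_subst (M : Lam) (x d : Nat) (N : Lam) (h : x ≤ d) :
    lower d (M.subst x N) = (lower (d + 1) M).subst x (lower d N) := by
  induction M generalizing x d N with
  | var n =>
      simp only [subst, lower]
      split_ifs <;> simp only [subst, lower] <;> split_ifs <;>
        (try simp only [Lam.var.injEq]) <;> omega
  | lam M ih =>
      simp only [subst, lower, Lam.lam.injEq]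
      rw [ih _ _ _ (by omega), lower_succ_lift 0 d N (Nat.zero_le d)]
  | app M L ihM ihL => simp [subst, lower, ihM _ _ _ h, ihL _ _ _ h]

theorem lower_zero_subst_succ (M : Lam) (x : Nat) (N : Lam) (h : hasVar 0 M = false) :
    lower 0 (M.subst (x + 1) (N.lift 0)) = (lower 0 M).subst x N := by
  conv_lhs => rw [← lift_lower 0 M h, subst_succ_lift _ 0 x N (Nat.zero_le x), lower_lift]

theorem hasVar_subst_of_lt (M : Lam) (x y : Nat) (N : Lam) (h : x < y)
    (hM : hasVar x M = false) (hN : hasVar x N = false) :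
    hasVar x (M.subst y N) = false := by
  induction M generalizing x y N with
  | var n =>
      simp only [hasVar, decide_eq_false_iff_not] at hM
      simp only [subst]
      split_ifs <;> first
        | exact hN
        | (simp only [hasVar, decide_eq_false_iff_not]; omega)
  | lam M ih =>
      simp only [hasVar] at hM
      simp only [subst, hasVar]
      exact ih _ _ _ (by omega) hM (by rw [hasVar_succ_lift_of_le x 0 N (Nat.zero_le x)]; exact hN)
  | app M L ihM ihL =>
      simp only [hasVar, Bool.or_eq_false_iff] at hM
      simp [subst, hasVar, ihM _ _ _ h hM.1 hN, ihL _ _ _ h hM.2 hN]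

theorem hasVar_subst_of_le (M : Lam) (x y : Nat) (N : Lam) (h : y ≤ x)
    (hM : hasVar (x + 1) M = false) (hN : hasVar x N = false) :
    hasVar x (M.subst y N) = false := by
  induction M generalizing x y N with
  | var n =>
      simp only [hasVar, decide_eq_false_iff_not] at hM
      simp only [subst]
      split_ifs <;> first
        | exact hN
        | (simp only [hasVar, decide_eq_false_iff_not]; omega)
  | lam M ih =>
      simp only [hasVar] at hM
      simp only [subst, hasVar]
      exact ih _ _ _ (by omega) hM (by rw [hasVar_succ_lift_of_le x 0 N (Nat.zero_le x)]; exact hN)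
  | app M L ihM ihL =>
      simp only [hasVar, Bool.or_eq_false_iff] at hM
      simp [subst, hasVar, ihM _ _ _ h hM.1 hN, ihL _ _ _ h hM.2 hN]

theorem eq_app_var_zero_of_lift_succ {d : Nat} {M N : Lam}
    (h : M.lift (d + 1) = .app (.var 0) N) : ∃ B, M = .app (.var 0) B ∧ N = B.lift (d + 1) := by
  rcases M with _ | _ | ⟨_ | _ | _, B⟩ <;> simp only [lift] at h
  · split at h <;> simp at h
  · cases h
  · simp only [Lam.app.injEq] at h
    rcases h with ⟨hH, rfl⟩
    split at hH <;> simp_all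
  all_goals simp at h

theorem Step.hasVar_eq_false {M N : Lam} (h : Step M N) {x : Nat}
    (hM : hasVar x M = false) : hasVar x N = false := by
  induction h generalizing x with
  | @contr _ A c =>
      cases c with
      | beta A B =>
          simp only [hasVar, Bool.or_eq_false_iff] at hM
          exact hasVar_subst_of_le A x 0 B (Nat.zero_le x) hM.1 hM.2
      | eta =>
          simp only [hasVar, Bool.or_eq_false_iff] at hM
          rw [← hasVar_succ_lift_of_le x 0 A (Nat.zero_le x)]; exact hM.1
  | lam _ ih => exact ih hM
  | appL _ ih =>
      simp only [hasVar, Bool.or_eq_false_iff] at hM ⊢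
      exact ⟨ih hM.1, hM.2⟩
  | appR _ ih =>
      simp only [hasVar, Bool.or_eq_false_iff] at hM ⊢
      exact ⟨hM.1, ih hM.2⟩

theorem Step.lower {M N : Lam} (h : Step M N) (d : Nat) :
    Step (lower d M) (lower d N) := by
  induction h generalizing d with
  | @contr _ A c =>
      cases c with
      | beta A B =>
          rw [Lam.lower, Lam.lower, lower_subst A 0 d B (Nat.zero_le d)]
          exact Step.contr (Contr.beta _ _)
      | eta =>
          simp only [Lam.lower, Nat.not_lt_zero, if_false]
          rw [lower_succ_lift 0 d A (Nat.zero_le d)]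
          exact Step.contr (Contr.eta _)
  | lam _ ih => exact Step.lam (ih _)
  | appL _ ih => exact Step.appL (ih _)
  | appR _ ih => exact Step.appR (ih _)

end Lam

namespace Tm.Steps

theorem lam {M N : Tm} (h : Steps M N) : Steps (.lam M) (.lam N) :=
  ReflTransGen.lift Tm.lam (fun _ _ => Step.lam) _ _ h

theorem freeze {M N : Tm} (h : Steps M N) : Steps (.freeze M) (.freeze N) :=
  ReflTransGen.lift Tm.freeze (fun _ _ => Step.freeze) _ _ h

theorem thaw {M N : Tm} (h : Steps M N) : Steps (.thaw M) (.thaw N) :=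
  ReflTransGen.lift Tm.thaw (fun _ _ => Step.thaw) _ _ h

theorem app {M M' N N' : Tm} (hM : Steps M M') (hN : Steps N N') :
    Steps (.app M N) (.app M' N') :=
  (ReflTransGen.lift (fun L => Tm.app L N) (fun _ _ => Step.appL) _ _ hM).trans
    (ReflTransGen.lift (fun L => Tm.app M' L) (fun _ _ => Step.appR) _ _ hN)

end Tm.Steps

theorem nat_isValue (M : Lam) : (nat M).IsValue := by
  cases M <;> simp only [nat] <;> constructor

theorem ds_lam_app_var_zero (B : Lam) (hB : B.hasVar 0 = false) :
    ds (.lam (.app (.var 0) B)) = nat (B.lower 0) := by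
  simp [ds, hB]

theorem ds_lam_of_not_exists (A : Lam) (h : ¬∃ B, A = .app (.var 0) B ∧ B.hasVar 0 = false) :
    ds (.lam A) = .thaw (.lam (ds A)) := by
  rcases A with _ | _ | ⟨⟨_ | _⟩ | _ | _, B⟩ <;> simp_all [ds, nat]

theorem ds_lam_cases (A : Lam) :
    (∃ B, A = .app (.var 0) B ∧ B.hasVar 0 = false) ∨ ds (.lam A) = .thaw (.lam (ds A)) := by
  by_cases h : ∃ B, A = .app (.var 0) B ∧ B.hasVar 0 = false
  · exact .inl h
  · exact .inr (ds_lam_of_not_exists A h)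

mutual

theorem ds_lift (M : Lam) (d : Nat) : ds (M.lift d) = (ds M).lift d := by
  match M with
  | .var n => simp only [Lam.lift]; split <;> simp [ds, Tm.lift, *]
  | .app A B => simp only [Lam.lift, ds, Tm.lift, nat_lift A, nat_lift B]
  | .lam A =>
    by_cases hA : ∃ B, A = .app (.var 0) B ∧ B.hasVar 0 = false
    · obtain ⟨B, rfl, hB⟩ := hA
      have hB' : (B.lift (d + 1)).hasVar 0 = false := by
        rwa [Lam.hasVar_lift_of_lt 0 (d + 1) B (by omega)]
      calc ds ((Lam.lam (.app (.var 0) B)).lift d)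
          = nat ((B.lift (d + 1)).lower 0) := by
            simp only [Lam.lift, Nat.zero_lt_succ, if_true, ds_lam_app_var_zero _ hB']
        _ = (ds (.lam (.app (.var 0) B))).lift d := by
            rw [Lam.lower_zero_lift_succ d B hB, nat_lift, ds_lam_app_var_zero _ hB]
    · have hA' : ¬∃ B', A.lift (d + 1) = .app (.var 0) B' ∧ B'.hasVar 0 = false := by
        rintro ⟨B', hAB', hB'⟩
        obtain ⟨B, rfl, rfl⟩ := Lam.eq_app_var_zero_of_lift_succ hAB'
        exact hA ⟨B, rfl, by rwa [Lam.hasVar_lift_of_lt 0 (d + 1) B (by omega)] at hB'⟩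
      rw [Lam.lift, ds_lam_of_not_exists _ hA', ds_lam_of_not_exists _ hA, ds_lift A (d + 1)]
      rfl
termination_by M.size
decreasing_by all_goals (subst_vars; simp only [Lam.size, Lam.size_lower]; omega)

theorem nat_lift (M : Lam) (d : Nat) : nat (M.lift d) = (nat M).lift d := by
  match M with
  | .var n => simp only [Lam.lift]; split <;> simp [nat, Tm.lift, *]
  | .lam A => simp only [Lam.lift, nat, Tm.lift, ds_lift A]
  | .app A B => simp only [Lam.lift, nat, Tm.lift, nat_lift A, nat_lift B]
termination_by M.size
decreasing_by all_goals (simp only [Lam.size]; omega)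

end

theorem nat_eq_lift_lower (B : Lam) (hB : B.hasVar 0 = false) :
    nat B = (nat (B.lower 0)).lift 0 := by
  rw [← nat_lift, Lam.lift_lower 0 B hB]

theorem steps_thaw_lam_ds (A : Lam) : Tm.Steps (.thaw (.lam (ds A))) (ds (.lam A)) := by
  rcases ds_lam_cases A with ⟨B, rfl, hB⟩ | h
  · have hds : ds (.app (.var 0) B) = .app (.var 0) ((nat (B.lower 0)).lift 0) := by
      rw [ds, nat, ← nat_eq_lift_lower B hB]
    rw [hds, ds_lam_app_var_zero B hB]
    exact ReflTransGen.single (.contr (.pure _ (nat_isValue _)))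
  · rw [h]
    exact ReflTransGen.refl

theorem steps_thaw_nat (A : Lam) : Tm.Steps (.thaw (nat A)) (ds A) := by
  cases A with
  | var n => rw [nat, ds]; exact ReflTransGen.refl
  | lam A => rw [nat]; exact steps_thaw_lam_ds A
  | app A B => rw [nat, ds]; exact ReflTransGen.single (.contr (.shdol _))

theorem steps_freeze_ds (A : Lam) : Tm.Steps (.freeze (ds A)) (nat A) := by
  cases A with
  | var n => rw [nat, ds]; exact ReflTransGen.single (.contr (.dolsh _ (.var n)))
  | app A B => rw [nat, ds]; exact ReflTransGen.refl
  | lam A =>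
    rcases ds_lam_cases A with ⟨B, rfl, hB⟩ | h
    · have hnat : nat (.lam (.app (.var 0) B)) = .lam (.app (.var 0) ((nat (B.lower 0)).lift 0)) := by
        rw [nat, ds, nat, ← nat_eq_lift_lower B hB]
      rw [hnat, ds_lam_app_var_zero B hB]
      exact ReflTransGen.single (.contr (.dolv _ (nat_isValue _)))
    · rw [h, nat]
      exact ReflTransGen.single (.contr (.dolsh _ (.lam _)))

mutual

theorem steps_subst_ds (M : Lam) (x : Nat) (L : Lam) :
    Tm.Steps ((ds M).subst x (nat L)) (ds (M.subst x L)) := by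
  match M with
  | .var n =>
    by_cases hn : n = x
    · subst hn
      simpa [ds, Tm.subst, Lam.subst] using steps_thaw_nat L
    · simp only [ds, Tm.subst, Lam.subst, if_neg hn]
      split <;> rw [ds] <;> exact ReflTransGen.refl
  | .app A B =>
    simpa only [ds, Tm.subst, Lam.subst] using (steps_subst_nat A x L).app (steps_subst_nat B x L)
  | .lam A =>
    rcases ds_lam_cases A with ⟨B, rfl, hB⟩ | h
    · have hB' : (B.subst (x + 1) (L.lift 0)).hasVar 0 = false :=
        Lam.hasVar_subst_of_lt B 0 (x + 1) _ (by omega) hB (Lam.hasVar_lift_self 0 L)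
      simp only [ds_lam_app_var_zero B hB, Lam.subst, Nat.zero_lt_succ, if_true,
        (Nat.succ_ne_zero x).symm, if_false]
      rw [ds_lam_app_var_zero _ hB', Lam.lower_zero_subst_succ _ _ _ hB]
      exact steps_subst_nat (B.lower 0) x L
    · rw [h, Lam.subst]
      simp only [Tm.subst, ← nat_lift]
      exact (steps_subst_ds A (x + 1) (L.lift 0)).lam.thaw.trans (steps_thaw_lam_ds _)
termination_by M.size
decreasing_by all_goals (subst_vars; simp only [Lam.size, Lam.size_lower]; omega)

theorem steps_subst_nat (M : Lam) (x : Nat) (L : Lam) :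
    Tm.Steps ((nat M).subst x (nat L)) (nat (M.subst x L)) := by
  match M with
  | .var n =>
    have h : (nat (.var n)).subst x (nat L) = nat ((Lam.var n).subst x L) := by
      simp only [nat, Tm.subst, Lam.subst]
      split_ifs <;> simp [nat]
    rw [h]
    exact ReflTransGen.refl
  | .lam A =>
    simpa only [nat, Tm.subst, Lam.subst, ← nat_lift] using (steps_subst_ds A (x + 1) (L.lift 0)).lam
  | .app A B =>
    simpa only [nat, Tm.subst, Lam.subst] using
      ((steps_subst_nat A x L).app (steps_subst_nat B x L)).freeze
termination_by M.size
decreasing_by all_goals (simp only [Lam.size]; omega)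

end

theorem nat_app (A B : Lam) : nat (.app A B) = .freeze (ds (.app A B)) := by
  rw [nat, ds]

theorem steps_of_beta (A B : Lam) :
    Tm.Steps (ds (.app (.lam A) B)) (ds (A.subst 0 B)) ∧
      Tm.Steps (nat (.app (.lam A) B)) (nat (A.subst 0 B)) := by
  have hds : Tm.Steps (ds (.app (.lam A) B)) (ds (A.subst 0 B)) := by
    rw [ds, nat]
    exact (ReflTransGen.single (.contr (.betav _ _ (nat_isValue B)))).trans
      (steps_subst_ds A 0 B)
  exact ⟨hds, by rw [nat_app]; exact hds.freeze.trans (steps_freeze_ds _)⟩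

theorem steps_of_eta (N : Lam) :
    Tm.Steps (ds (.lam (.app (N.lift 0) (.var 0)))) (ds N) ∧
      Tm.Steps (nat (.lam (.app (N.lift 0) (.var 0)))) (nat N) := by
  have hds : ds (.app (N.lift 0) (.var 0)) = .app ((nat N).lift 0) (.var 0) := by
    rw [ds, nat, nat_lift]
  have hlam : ds (.lam (.app (N.lift 0) (.var 0))) = .thaw (.lam (ds (.app (N.lift 0) (.var 0)))) :=
    ds_lam_of_not_exists _ fun ⟨B, hB, hB0⟩ => by
      obtain ⟨-, rfl⟩ := Lam.app.inj hB
      simp [Lam.hasVar] at hB0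
  have hetav : Tm.Steps (.lam (.app ((nat N).lift 0) (.var 0))) (nat N) :=
    ReflTransGen.single (.contr (.etav _ (nat_isValue N)))
  constructor
  · rw [hlam, hds]
    exact hetav.thaw.trans (steps_thaw_nat N)
  · rw [nat, hds]
    exact hetav

theorem steps_app_of_steps_nat {A A' C C' : Lam} (hA : Tm.Steps (nat A) (nat A'))
    (hC : Tm.Steps (nat C) (nat C')) :
    Tm.Steps (ds (.app A C)) (ds (.app A' C')) ∧ Tm.Steps (nat (.app A C)) (nat (.app A' C')) := by
  have hds : Tm.Steps (ds (.app A C)) (ds (.app A' C')) := by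
    rw [ds, ds]
    exact hA.app hC
  exact ⟨hds, by rw [nat_app, nat_app]; exact hds.freeze⟩

theorem steps_of_step {M N : Lam} (h : Lam.Step M N) :
    Tm.Steps (ds M) (ds N) ∧ Tm.Steps (nat M) (nat N) := by
  cases h with
  | contr c =>
    cases c with
    | beta A B => exact steps_of_beta A B
    | eta => exact steps_of_eta N
  | @lam A B h =>
    refine ⟨?_, by rw [nat, nat]; exact (steps_of_step h).1.lam⟩
    rcases ds_lam_cases A with ⟨B₀, rfl, hB₀⟩ | hA
    · cases h with
      | contr c => nomatch c
      | appL h => nomatch h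
      | appR h =>
        rw [ds_lam_app_var_zero _ hB₀, ds_lam_app_var_zero _ (h.hasVar_eq_false hB₀)]
        -- `h.lower 0` is not a subderivation of `h`, hence the recursion on `M.size`
        exact (steps_of_step (h.lower 0)).2
    · rw [hA]
      exact (steps_of_step h).1.lam.thaw.trans (steps_thaw_lam_ds B)
  | appL h => exact steps_app_of_steps_nat (steps_of_step h).2 ReflTransGen.refl
  | appR h => exact steps_app_of_steps_nat ReflTransGen.refl (steps_of_step h).2
termination_by M.size
decreasing_by all_goals (subst_vars; simp only [Lam.size, Lam.size_lower]; omega)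

/-- **Monotonicity of `#` and `♮`.**  If `M ↠λ N` then `M# ↠Λ$ N#` and
`M♮ ↠Λ$ N♮`. -/
theorem ds_monotone (M N : Lam) (h : Lam.Steps M N) :
    Tm.Steps (ds M) (ds N) ∧ Tm.Steps (nat M) (nat N) := by
  induction h with
  | refl => exact ⟨ReflTransGen.refl, ReflTransGen.refl⟩
  | tail _ hstep ih =>
    exact ⟨ih.1.trans (steps_of_step hstep).1, ih.2.trans (steps_of_step hstep).2⟩

end Shift0
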